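/- arXiv:2311.16057 — 2 statements merged into one kernel-verified Lean document; each statement's English description precedes it below -/
import Mathlib

section
/- Let B be a finite set equipped with a partial order, let ℓ ≥ 0, and let T = {s ∈ ℕ^B : Σ_b s(b) = ℓ}. Define the matrix P indexed by T × T by P[s,s'] = ∏_{b∈B} binom(Σ_{b'≥b} s'(b') − Σ_{b'>b} s(b'), s(b)) (where a binomial coefficient with negative top argument is 0). Then P is invertible over ℂ with determinant 1. -/
open Finset

/-- Binomial coefficient with an integer top argument, which is `0` when the top
argument is negative. -/
def intBinom (a : ℤ) (k : ℕ) : ℕ := if a < 0 then 0 else a.toNat.choose k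

/-- The matrix `P` indexed by `T = {s ∈ ℕ^B : Σ_b s(b) = ℓ}` with
`P[s,s'] = ∏_{b∈B} binom(Σ_{b'≥b} s'(b') − Σ_{b'>b} s(b'), s(b))`. -/
noncomputable def overcountMatrix {B : Type*} [Fintype B] [DecidableEq B] [PartialOrder B]
    [DecidableRel ((· ≤ ·) : B → B → Prop)] (ℓ : ℕ)
    [Fintype {s : B → ℕ // ∑ b, s b = ℓ}] :
    Matrix {s : B → ℕ // ∑ b, s b = ℓ} {s : B → ℕ // ∑ b, s b = ℓ} ℂ :=
  Matrix.of fun s s' =>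
    ((∏ b, intBinom
        ((∑ b' ∈ Finset.univ.filter (fun b' => b ≤ b'), (s'.1 b' : ℤ)) -
          ∑ b' ∈ Finset.univ.filter (fun b' => b ≤ b' ∧ b ≠ b'), (s.1 b' : ℤ))
        (s.1 b) : ℕ) : ℂ)

/-! Instead of extending the order on `B` to a total order, map `s ∈ T` to its
up-set sums `b ↦ Σ_{b' ≥ b} s(b')`, which determine `s` by downward induction on `B`. An entry
`P[s,s']` can only be nonzero when the up-set sums of `s` are pointwise below those of `s'`, and the
diagonal entries are `∏_b binom(s(b), s(b)) = 1`. Along a nonzero term `∏_i P[σ i, i]` of the Leibniz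
formula the up-set sums decrease, so going once around each cycle of `σ` forces `σ = 1`. -/

theorem Equiv.Perm.eq_one_of_forall_le {ι α : Type*} [Finite ι] [PartialOrder α] {f : ι → α}
    (hf : Function.Injective f) {σ : Equiv.Perm ι} (hσ : ∀ i, f (σ i) ≤ f i) : σ = 1 := by
  have hpow : ∀ n i, f ((σ ^ n) i) ≤ f i := by
    intro n
    induction n with
    | zero => simp
    | succ n ih =>
      intro i
      rw [pow_succ, Equiv.Perm.mul_apply]
      exact (ih (σ i)).trans (hσ i)
  ext i
  obtain ⟨k, hk⟩ : ∃ k, orderOf σ = k + 1 := ⟨orderOf σ - 1, by have := orderOf_pos σ; omega⟩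
  have hcycle : (σ ^ k) (σ i) = i := by
    rw [← Equiv.Perm.mul_apply, ← pow_succ, ← hk, pow_orderOf_eq_one, Equiv.Perm.one_apply]
  have hback := hpow k (σ i)
  rw [hcycle] at hback
  exact hf ((hσ i).antisymm hback)

theorem Matrix.det_eq_prod_diag_of_ne_zero_imp_le {ι α R : Type*} [Fintype ι] [DecidableEq ι]
    [CommRing R] [PartialOrder α] (M : Matrix ι ι R) {f : ι → α} (hf : Function.Injective f)
    (hM : ∀ i j, M i j ≠ 0 → f i ≤ f j) : M.det = ∏ i, M i i := by
  rw [Matrix.det_apply, Finset.sum_eq_single (1 : Equiv.Perm ι)]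
  · simp
  · intro σ _ hσ
    by_cases hzero : ∃ i, M (σ i) i = 0
    · obtain ⟨i, hi⟩ := hzero
      rw [prod_eq_zero (f := fun j => M (σ j) j) (mem_univ i) hi, smul_zero]
    · rw [not_exists] at hzero
      exact absurd (Equiv.Perm.eq_one_of_forall_le hf fun i => hM _ _ (hzero i)) hσ
  · exact fun h => absurd (mem_univ _) h

lemma intBinom_self (k : ℕ) : intBinom k k = 1 := by
  simp [intBinom]

lemma le_of_intBinom_ne_zero {a : ℤ} {k : ℕ} (h : intBinom a k ≠ 0) : (k : ℤ) ≤ a := by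
  unfold intBinom at h
  split_ifs at h with ha
  · exact absurd rfl h
  · have hk : k ≤ a.toNat := not_lt.mp (mt Nat.choose_eq_zero_iff.mpr h)
    omega

section UpSum

variable {B M : Type*} [Fintype B] [PartialOrder B] [DecidableRel ((· ≤ ·) : B → B → Prop)]

def upSum [AddCommMonoid M] (s : B → M) (b : B) : M := ∑ b' ∈ univ.filter (b ≤ ·), s b'

def strictUpSum [DecidableEq B] [AddCommMonoid M] (s : B → M) (b : B) : M :=
  ∑ b' ∈ univ.filter (fun b' => b ≤ b' ∧ b ≠ b'), s b'

lemma upSum_eq_add_strictUpSum [DecidableEq B] [AddCommMonoid M] (s : B → M) (b : B) :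
    upSum s b = s b + strictUpSum s b := by
  have hsplit : univ.filter (b ≤ ·) = insert b (univ.filter fun b' => b ≤ b' ∧ b ≠ b') := by
    ext b'
    simp only [mem_filter, mem_univ, true_and, mem_insert]
    rcases eq_or_ne b b' with rfl | hne
    · simp
    · simp [hne, eq_comm]
  rw [upSum, strictUpSum, hsplit, sum_insert (by simp)]

lemma upSum_injective [AddCancelCommMonoid M] :
    Function.Injective (upSum : (B → M) → B → M) := by
  classical
  intro s s' h
  funext b
  induction b using WellFoundedGT.induction with
  | _ b ih =>
    have hstrict : strictUpSum s b = strictUpSum s' b := by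
      refine sum_congr rfl fun b' hb' => ih b' ?_
      obtain ⟨-, hle, hne⟩ := mem_filter.mp hb'
      exact lt_of_le_of_ne hle hne
    have hb := congrFun h b
    rw [upSum_eq_add_strictUpSum, upSum_eq_add_strictUpSum, hstrict] at hb
    exact add_right_cancel hb

end UpSum

section OvercountMatrix

variable {B : Type*} [Fintype B] [DecidableEq B] [PartialOrder B]
  [DecidableRel ((· ≤ ·) : B → B → Prop)] {ℓ : ℕ} [Fintype {s : B → ℕ // ∑ b, s b = ℓ}]

lemma overcountMatrix_apply (s s' : {s : B → ℕ // ∑ b, s b = ℓ}) :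
    overcountMatrix ℓ s s' =
      ((∏ b, intBinom (((upSum s'.1 b : ℕ) : ℤ) - (strictUpSum s.1 b : ℕ)) (s.1 b) : ℕ) : ℂ) := by
  simp [overcountMatrix, upSum, strictUpSum]

lemma overcountMatrix_apply_self (s : {s : B → ℕ // ∑ b, s b = ℓ}) :
    overcountMatrix ℓ s s = 1 := by
  simp [overcountMatrix_apply, upSum_eq_add_strictUpSum, intBinom_self]

lemma upSum_le_of_overcountMatrix_ne_zero {s s' : {s : B → ℕ // ∑ b, s b = ℓ}}
    (h : overcountMatrix ℓ s s' ≠ 0) : upSum s.1 ≤ upSum s'.1 := by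
  intro b
  rw [overcountMatrix_apply, Nat.cast_ne_zero, prod_ne_zero_iff] at h
  have hb := le_of_intBinom_ne_zero (h b (mem_univ b))
  have hsplit := upSum_eq_add_strictUpSum s.1 b
  zify at hsplit ⊢
  linarith

end OvercountMatrix

/-- The over-counting matrix `P` is invertible over `ℂ` with determinant `1`. -/
theorem overcountMatrix_det_eq_one {B : Type*} [Fintype B] [DecidableEq B] [PartialOrder B]
    [DecidableRel ((· ≤ ·) : B → B → Prop)] (ℓ : ℕ)
    [Fintype {s : B → ℕ // ∑ b, s b = ℓ}] :
    (overcountMatrix (B := B) ℓ).det = 1 ∧ IsUnit (overcountMatrix (B := B) ℓ) := by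
  have hdet : (overcountMatrix (B := B) ℓ).det = 1 := by
    rw [Matrix.det_eq_prod_diag_of_ne_zero_imp_le _
      (upSum_injective.comp Subtype.val_injective)
      fun _ _ => upSum_le_of_overcountMatrix_ne_zero]
    simp [overcountMatrix_apply_self]
  exact ⟨hdet, (Matrix.isUnit_iff_isUnit_det _).mpr (hdet ▸ isUnit_one)⟩
end

section
/- Let u, v be complex unit vectors and let A_1, ..., A_m be complex matrices of compatible dimensions with operator norms ||A_i|| ≤ c_i. Then |u† A_1 A_2 ··· A_m v| ≤ ∏_{i=1}^m c_i. In particular, if h(s) can be written as u† Q_1 R_1 ··· W ··· Q_d' v with the stated norm bounds ||Q_i|| ≤ sqrt(∏_{b: b_{≤i}=0^{i-1}1} binom(t, s(b))), ||R_i|| ≤ 1, ||W|| ≤ sqrt(∏_{b: b_{≤r}=0^r} binom(ñ, s(b)) · ∏_{b: b_{≥r}=0^{d-r+1}} binom(ñ, s(b))), then |h(s)| ≤ t^ℓ · (ñ/t)^{e_r/2} where e_r = Σ_{b: b_{≤r}=0^r} s(b) + Σ_{b: b_{≥r}=0^{d-r+1}} s(b) and Σ_b s(b) = ℓ, assuming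 t ≤ ñ. -/
open Matrix Finset
open scoped Matrix.Norms.L2Operator

/-!
Part (i) is Cauchy–Schwarz, `|u† A v| ≤ ‖u‖ ‖A‖ ‖v‖`, together with submultiplicativity of the
operator norm along the chain. For part (ii), `binom(t, k) ≤ t^k` turns the `t`-binomials over the
strings off a zero pattern and the `nn`-binomials over the strings on it into
`t^(ℓ - e) nn^e = t^ℓ (nn/t)^e`, `e` the weight on the pattern; the square root of the product of
this bound for the two patterns `b_{≤r} = 0^r` and `b_{≥r} = 0^{d-r+1}` is the claim.
-/

/-- The product `M_1 * M_2 * ⋯ * M_k` of a chain of rectangular matrices with compatible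
dimensions (empty product is the identity). -/
noncomputable def matChain (n : ℕ → ℕ)
    (M : ∀ i, Matrix (Fin (n i)) (Fin (n (i + 1))) ℂ) :
    ∀ k, Matrix (Fin (n 0)) (Fin (n k)) ℂ
  | 0 => 1
  | k + 1 => matChain n M k * M k

/-- Odd-Hamming-weight binary strings of length `d`. -/
def OddB (d : ℕ) := {b : Fin d → Bool // Odd (Finset.univ.filter fun j => b j = true).card}

/-- `b_{≤r} = 0^r` : the first `r` coordinates of `b` vanish (1-indexed). -/
def lowZero {d : ℕ} (r : ℕ) (b : OddB d) : Prop :=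
  ∀ j : Fin d, (j : ℕ) + 1 ≤ r → b.1 j = false

/-- `b_{≥r} = 0^{d-r+1}` : coordinates `r` through `d` of `b` vanish (1-indexed). -/
def tailZero {d : ℕ} (r : ℕ) (b : OddB d) : Prop :=
  ∀ j : Fin d, r ≤ (j : ℕ) + 1 → b.1 j = false

instance {d r : ℕ} : DecidablePred (lowZero (d := d) r) := fun _ =>
  Fintype.decidableForallFintype
instance {d r : ℕ} : DecidablePred (tailZero (d := d) r) := fun _ =>
  Fintype.decidableForallFintype
noncomputable instance {d : ℕ} : Fintype (OddB d) := Subtype.fintype _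

section L2OpNorm

variable {𝕜 : Type*} [RCLike 𝕜] {m n : Type*} [Fintype m] [Fintype n]

lemma EuclideanSpace.norm_toLp_eq_one_of_sum_sq (u : n → 𝕜) (hu : ∑ i, ‖u i‖ ^ 2 = 1) :
    ‖WithLp.toLp 2 u‖ = 1 := by
  simp [EuclideanSpace.norm_eq, hu]

variable [DecidableEq n]

lemma Matrix.l2_opNorm_one_le : ‖(1 : Matrix n n 𝕜)‖ ≤ 1 := by
  rw [Matrix.cstar_norm_def, map_one]
  exact ContinuousLinearMap.norm_id_le

lemma Matrix.norm_star_dotProduct_mulVec_le (A : Matrix m n 𝕜) (u : m → 𝕜) (v : n → 𝕜) :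
    ‖star u ⬝ᵥ A *ᵥ v‖ ≤ ‖WithLp.toLp 2 u‖ * (‖A‖ * ‖WithLp.toLp 2 v‖) := by
  have hinner : star u ⬝ᵥ A *ᵥ v = inner 𝕜 (WithLp.toLp 2 u) (WithLp.toLp 2 (A *ᵥ v)) := by
    simp [EuclideanSpace.inner_eq_star_dotProduct, dotProduct_comm]
  rw [hinner]
  exact (norm_inner_le_norm _ _).trans
    (mul_le_mul_of_nonneg_left (A.l2_opNorm_mulVec _) (norm_nonneg _))

end L2OpNorm

lemma norm_matChain_le_prod_norm (n : ℕ → ℕ) (M : ∀ i, Matrix (Fin (n i)) (Fin (n (i + 1))) ℂ)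
    (k : ℕ) : ‖matChain n M k‖ ≤ ∏ i ∈ range k, ‖M i‖ := by
  induction k with
  | zero => exact Matrix.l2_opNorm_one_le
  | succ k ih =>
    rw [prod_range_succ]
    exact (Matrix.l2_opNorm_mul _ _).trans (mul_le_mul_of_nonneg_right ih (norm_nonneg _))

lemma prod_choose_le_pow_sum {ι : Type*} (t : ℕ) (s : ι → ℕ) (S : Finset ι) :
    ∏ b ∈ S, (t.choose (s b) : ℝ) ≤ (t : ℝ) ^ ∑ b ∈ S, s b := by
  rw [← prod_pow_eq_pow_sum]
  exact prod_le_prod (fun _ _ => by positivity) fun b _ => mod_cast Nat.choose_le_pow t (s b)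

lemma prod_choose_filter_not_mul_prod_choose_filter_le {ι : Type*} [Fintype ι] (p : ι → Prop)
    [DecidablePred p] (s : ι → ℕ) {t : ℕ} (nn : ℕ) (ht : t ≠ 0) :
    (∏ b ∈ univ.filter (fun b => ¬ p b), (t.choose (s b) : ℝ)) *
        ∏ b ∈ univ.filter p, (nn.choose (s b) : ℝ) ≤
      (t : ℝ) ^ (∑ b, s b) * ((nn : ℝ) / t) ^ ∑ b ∈ univ.filter p, s b := by
  have ht' : (t : ℝ) ≠ 0 := mod_cast ht
  calc _ ≤ (t : ℝ) ^ (∑ b ∈ univ.filter (fun b => ¬ p b), s b) *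
        (nn : ℝ) ^ ∑ b ∈ univ.filter p, s b :=
        mul_le_mul (prod_choose_le_pow_sum t s _) (prod_choose_le_pow_sum nn s _)
          (prod_nonneg fun _ _ => by positivity) (by positivity)
    _ = _ := by
        rw [← sum_filter_add_sum_filter_not univ p s, div_pow, pow_add]
        field_simp

/-- (i) `|u† A_1 ⋯ A_k v| ≤ ∏ c_i` for unit vectors `u, v` and matrices with `‖A_i‖ ≤ c_i`;
(ii) in particular, any quantity `h(s)` bounded by the square root of the product of the
binomial norm bounds of the matrices `Q_i, R_i, W, Q_i', R_i'` is at most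
`t^ℓ · √((nn/t)^{e_r})`, where `e_r = Σ_{b : b_{≤r}=0^r} s(b) + Σ_{b : b_{≥r}=0^{d-r+1}} s(b)`
and `Σ_b s(b) = ℓ`, assuming `1 ≤ t ≤ nn`. -/
theorem abs_matChain_le_prod_and_h_bound :
    (∀ (n : ℕ → ℕ) (M : ∀ i, Matrix (Fin (n i)) (Fin (n (i + 1))) ℂ) (c : ℕ → ℝ) (k : ℕ),
      (∀ i, ‖M i‖ ≤ c i) →
      ∀ (u : Fin (n 0) → ℂ) (v : Fin (n k) → ℂ),
        (∑ i, ‖u i‖ ^ 2 = 1) → (∑ j, ‖v j‖ ^ 2 = 1) →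
        ‖star u ⬝ᵥ (matChain n M k).mulVec v‖ ≤ ∏ i ∈ Finset.range k, c i) ∧
    (∀ (d r t nn ℓ : ℕ), 2 ≤ d → 1 ≤ r → r ≤ d → 1 ≤ t → t ≤ nn →
      ∀ s : OddB d → ℕ, (∑ b, s b = ℓ) →
      ∀ z : ℂ,
        ‖z‖ ≤ Real.sqrt
          ((∏ b ∈ Finset.univ.filter (fun b : OddB d => ¬ lowZero r b),
              (t.choose (s b) : ℝ)) *
           (∏ b ∈ Finset.univ.filter (fun b : OddB d => ¬ tailZero r b),
              (t.choose (s b) : ℝ)) *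
           (∏ b ∈ Finset.univ.filter (fun b : OddB d => lowZero r b),
              (nn.choose (s b) : ℝ)) *
           (∏ b ∈ Finset.univ.filter (fun b : OddB d => tailZero r b),
              (nn.choose (s b) : ℝ))) →
        ‖z‖ ≤ (t : ℝ) ^ ℓ * Real.sqrt (((nn : ℝ) / t) ^
          ((∑ b ∈ Finset.univ.filter (fun b : OddB d => lowZero r b), s b) +
           (∑ b ∈ Finset.univ.filter (fun b : OddB d => tailZero r b), s b)))) := by
  refine ⟨fun n M c k hM u v hu hv => ?_, fun d r t nn ℓ _ _ _ ht _ s hs z hz => ?_⟩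
  · calc ‖star u ⬝ᵥ matChain n M k *ᵥ v‖
        ≤ ‖WithLp.toLp 2 u‖ * (‖matChain n M k‖ * ‖WithLp.toLp 2 v‖) :=
          Matrix.norm_star_dotProduct_mulVec_le _ u v
      _ = ‖matChain n M k‖ := by
          rw [EuclideanSpace.norm_toLp_eq_one_of_sum_sq u hu,
            EuclideanSpace.norm_toLp_eq_one_of_sum_sq v hv, one_mul, mul_one]
      _ ≤ ∏ i ∈ range k, ‖M i‖ := norm_matChain_le_prod_norm n M k
      _ ≤ ∏ i ∈ range k, c i := prod_le_prod (fun i _ => norm_nonneg _) fun i _ => hM i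
  · have ht0 : t ≠ 0 := Nat.one_le_iff_ne_zero.mp ht
    have hlow := prod_choose_filter_not_mul_prod_choose_filter_le (lowZero r) s nn ht0
    have htail := prod_choose_filter_not_mul_prod_choose_filter_le (tailZero r) s nn ht0
    rw [hs] at hlow htail
    calc ‖z‖ ≤ _ := hz
      _ = Real.sqrt (((∏ b ∈ univ.filter (fun b => ¬ lowZero r b), (t.choose (s b) : ℝ)) *
              ∏ b ∈ univ.filter (lowZero r), (nn.choose (s b) : ℝ)) *
            ((∏ b ∈ univ.filter (fun b => ¬ tailZero r b), (t.choose (s b) : ℝ)) *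
              ∏ b ∈ univ.filter (tailZero r), (nn.choose (s b) : ℝ))) := by ring_nf
      _ ≤ Real.sqrt (((t : ℝ) ^ ℓ * ((nn : ℝ) / t) ^ ∑ b ∈ univ.filter (lowZero r), s b) *
            ((t : ℝ) ^ ℓ * ((nn : ℝ) / t) ^ ∑ b ∈ univ.filter (tailZero r), s b)) :=
          Real.sqrt_le_sqrt (mul_le_mul hlow htail (by positivity) (by positivity))
      _ = _ := by
          rw [mul_mul_mul_comm, Real.sqrt_mul' _ (by positivity),
            Real.sqrt_mul_self (by positivity), ← pow_add]
end
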